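/- arXiv:2504.17178 — 3 statements merged into one kernel-verified Lean document; each statement's English description precedes it below -/
import Mathlib

section
/- Define τ(n,ℓ) for positive integers n, ℓ and fixed positive real r by: τ(1,ℓ)=0; τ(n,1)=C(n,2)·r for n>1; and τ(n,ℓ)=min_{1≤i≤n-1}{ τ(i,ℓ-1) + (n-i)·r + τ(n-i,ℓ) } for n>1, ℓ>1. Then for any n,ℓ, if m is an integer satisfying C(m,ℓ) ≤ n ≤ C(m+1,ℓ), we have τ(n,ℓ) = [ℓ·C(m,ℓ+1) + (m-ℓ+1)·(n - C(m,ℓ))]·r. -/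
open Finset

private def lsmF (n ℓ : ℕ) : ℕ := ∑ k ∈ Finset.range n, (n - (ℓ + k).choose ℓ)

private lemma choose_ge (ℓ k : ℕ) (hℓ : 1 ≤ ℓ) : k + 1 ≤ (ℓ + k).choose ℓ := by
  have h1 : (ℓ + k).choose ℓ = (ℓ + k).choose k := by
    have := Nat.choose_symm (n := ℓ + k) (k := ℓ) (by omega)
    rw [show ℓ + k - ℓ = k by omega] at this
    exact this.symm
  rw [h1]
  calc k + 1 = (k + 1).choose k := (Nat.choose_succ_self_right k).symm
    _ ≤ (ℓ + k).choose k := Nat.choose_le_choose k (by omega)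

private lemma lsmF_big (n ℓ N : ℕ) (hℓ : 1 ≤ ℓ) (hN : n ≤ N) :
    lsmF n ℓ = ∑ k ∈ Finset.range N, (n - (ℓ + k).choose ℓ) := by
  refine Finset.sum_subset (Finset.range_subset_range.2 hN) ?_
  intro k _ hk
  simp only [Finset.mem_range, not_lt] at hk
  have := choose_ge ℓ k hℓ
  omega

private lemma hockey (ℓ d : ℕ) :
    ∑ k ∈ Finset.range d, (ℓ + k).choose ℓ = (ℓ + d).choose (ℓ + 1) := by
  induction d with
  | zero => simp [Nat.choose_eq_zero_of_lt]
  | succ d ih =>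
      rw [Finset.sum_range_succ, ih, show ℓ + (d+1) = (ℓ + d) + 1 by omega,
        Nat.choose_succ_succ]
      simp [Nat.succ_eq_add_one]
      omega

private lemma lsmF_one (ℓ : ℕ) : lsmF 1 ℓ = 0 := by
  simp [lsmF, Nat.choose_self]

private lemma lsmF_eq (n ℓ m : ℕ) (hn : 1 ≤ n) (hℓ : 1 ≤ ℓ)
    (h1 : m.choose ℓ ≤ n) (h2 : n ≤ (m + 1).choose ℓ) :
    lsmF n ℓ = ℓ * m.choose (ℓ + 1) + (m + 1 - ℓ) * (n - m.choose ℓ) := by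
  -- m + 1 ≥ ℓ
  have hml : ℓ ≤ m + 1 := by
    by_contra h
    have : (m+1).choose ℓ = 0 := Nat.choose_eq_zero_of_lt (by omega)
    omega
  rcases Nat.lt_or_ge m ℓ with hcase | hcase
  · -- m + 1 = ℓ, so n = 1
    have hm1 : m + 1 = ℓ := by omega
    have : (m+1).choose ℓ = 1 := by rw [hm1, Nat.choose_self]
    have hn1 : n = 1 := by omega
    have : m.choose (ℓ+1) = 0 := Nat.choose_eq_zero_of_lt (by omega)
    rw [hn1, lsmF_one]
    have : m.choose ℓ = 0 := Nat.choose_eq_zero_of_lt (by omega)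
    simp_all
  · -- m ≥ ℓ
    set d := m + 1 - ℓ with hd
    have hdm : ℓ + d = m + 1 := by omega
    have hd1 : 1 ≤ d := by omega
    -- d ≤ n
    have hdn : d ≤ n := by
      have := choose_ge ℓ (m - ℓ) hℓ
      rw [show ℓ + (m - ℓ) = m by omega] at this
      omega
    -- restrict the sum to range d
    have hs : lsmF n ℓ = ∑ k ∈ Finset.range d, (n - (ℓ + k).choose ℓ) := by
      rw [lsmF]
      refine (Finset.sum_subset (Finset.range_subset_range.2 hdn) ?_).symm
      intro k _ hk
      simp only [Finset.mem_range, not_lt] at hk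
      have : (m+1).choose ℓ ≤ (ℓ + k).choose ℓ := Nat.choose_le_choose ℓ (by omega)
      omega
    -- every term in range d is untruncated
    have hterm : ∀ k ∈ Finset.range d, (ℓ + k).choose ℓ ≤ n := by
      intro k hk
      simp only [Finset.mem_range] at hk
      have : (ℓ + k).choose ℓ ≤ m.choose ℓ := Nat.choose_le_choose ℓ (by omega)
      omega
    have hsum : (∑ k ∈ Finset.range d, (n - (ℓ + k).choose ℓ))
        + (ℓ + d).choose (ℓ + 1) = d * n := by
      rw [← hockey ℓ d, ← Finset.sum_add_distrib]
      rw [Finset.sum_congr rfl (fun k hk => Nat.sub_add_cancel (hterm k hk))]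
      simp [Finset.sum_const, mul_comm]
    -- key binomial identity
    have hkey : m.choose (ℓ+1) * (ℓ+1) = m.choose ℓ * (m - ℓ) := Nat.choose_succ_right_eq m ℓ
    have hpas : (ℓ + d).choose (ℓ+1) = m.choose ℓ + m.choose (ℓ+1) := by
      rw [hdm, Nat.choose_succ_succ]
    -- finish by linear arithmetic over products
    have hq : m - ℓ + 1 = d := by omega
    set P := m.choose (ℓ+1)
    set C := m.choose ℓ
    set q := m - ℓ with hqdef
    have e1 : P * (ℓ + 1) = C * q := hkey
    have goal2 : ℓ * P + d * (n - C) + (C + P) = d * n := by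
      have hnC : C ≤ n := h1
      have expand : d * n = d * C + d * (n - C) := by
        rw [← Nat.mul_add, Nat.add_sub_cancel' hnC]
      rw [expand]
      have : ℓ * P + (C + P) = d * C := by
        have : (ℓ + 1) * P = q * C := by rw [mul_comm, e1, mul_comm]
        have hdq : d = q + 1 := by omega
        rw [hdq]
        calc ℓ * P + (C + P) = (ℓ + 1) * P + C := by ring
          _ = q * C + C := by rw [this]
          _ = (q + 1) * C := by ring
      omega
    omega

private lemma lsmF_decomp (i n ℓ' : ℕ) (hi : i ≤ n) (hℓ' : 1 ≤ ℓ') :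
    lsmF i ℓ' + (n - i) + lsmF (n - i) (ℓ' + 1)
      = ∑ k ∈ Finset.range (n + 1),
          ((i - (ℓ' + k).choose ℓ') + ((n - i) - (ℓ' + k).choose (ℓ' + 1))) := by
  rw [Finset.sum_add_distrib]
  have hA : ∑ k ∈ Finset.range (n+1), (i - (ℓ' + k).choose ℓ') = lsmF i ℓ' :=
    (lsmF_big i ℓ' (n+1) hℓ' (by omega)).symm
  have hB : ∑ k ∈ Finset.range (n+1), ((n - i) - (ℓ' + k).choose (ℓ' + 1))
      = (n - i) + lsmF (n - i) (ℓ' + 1) := by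
    rw [Finset.sum_range_succ' (fun k => (n - i) - (ℓ' + k).choose (ℓ' + 1)) n]
    have h0 : (n - i) - (ℓ' + 0).choose (ℓ' + 1) = n - i := by
      rw [Nat.add_zero, Nat.choose_eq_zero_of_lt (by omega)]
      omega
    rw [h0]
    have : ∑ k ∈ Finset.range n, ((n - i) - (ℓ' + (k+1)).choose (ℓ' + 1))
        = lsmF (n - i) (ℓ' + 1) := by
      rw [lsmF_big (n - i) (ℓ' + 1) n (by omega) (by omega)]
      refine Finset.sum_congr rfl fun k _ => by rw [show ℓ' + (k+1) = ℓ' + 1 + k by omega]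
    rw [this]
    omega
  rw [hA, hB]
  omega

private lemma lsmF_le (n ℓ i : ℕ) (hℓ : 2 ≤ ℓ) (hi : i ≤ n) :
    lsmF n ℓ ≤ lsmF i (ℓ - 1) + (n - i) + lsmF (n - i) ℓ := by
  obtain ⟨ℓ', rfl⟩ : ∃ ℓ', ℓ = ℓ' + 1 := ⟨ℓ - 1, by omega⟩
  have hℓ' : 1 ≤ ℓ' := by omega
  rw [show ℓ' + 1 - 1 = ℓ' by omega]
  rw [lsmF_decomp i n ℓ' hi hℓ']
  rw [lsmF_big n (ℓ' + 1) (n + 1) (by omega) (by omega)]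
  refine Finset.sum_le_sum fun k _ => ?_
  have hpas : (ℓ' + 1 + k).choose (ℓ' + 1)
      = (ℓ' + k).choose ℓ' + (ℓ' + k).choose (ℓ' + 1) := by
    rw [show ℓ' + 1 + k = (ℓ' + k) + 1 by omega, Nat.choose_succ_succ]
  omega

private lemma lsmF_split (n ℓ m : ℕ) (hn : 2 ≤ n) (hℓ : 2 ≤ ℓ)
    (h1 : m.choose ℓ ≤ n) (h2 : n ≤ (m + 1).choose ℓ) :
    ∃ i, 1 ≤ i ∧ i ≤ n - 1 ∧
      lsmF i (ℓ - 1) + (n - i) + lsmF (n - i) ℓ = lsmF n ℓ := by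
  -- m ≥ ℓ
  have hml : ℓ ≤ m := by
    by_contra h
    rcases Nat.lt_or_ge (m+1) ℓ with h' | h'
    · have : (m+1).choose ℓ = 0 := Nat.choose_eq_zero_of_lt h'
      omega
    · have hm1 : m + 1 = ℓ := by omega
      have : (m+1).choose ℓ = 1 := by rw [hm1, Nat.choose_self]
      omega
  obtain ⟨ℓ', rfl⟩ : ∃ ℓ', ℓ = ℓ' + 1 := ⟨ℓ - 1, by omega⟩
  obtain ⟨m', rfl⟩ : ∃ m', m = m' + 1 := ⟨m - 1, by omega⟩
  have hℓ' : 1 ≤ ℓ' := by omega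
  have hm' : ℓ' ≤ m' := by omega
  -- Pascal facts
  have pascmm : (m'+1).choose (ℓ'+1) = m'.choose ℓ' + m'.choose (ℓ'+1) :=
    Nat.choose_succ_succ m' ℓ'
  have pascm1 : (m'+2).choose (ℓ'+1) = (m'+1).choose ℓ' + (m'+1).choose (ℓ'+1) :=
    Nat.choose_succ_succ (m'+1) ℓ'
  rw [show m' + 1 + 1 = m' + 2 by omega] at h2
  have hA : 1 ≤ m'.choose ℓ' := Nat.choose_pos hm'
  have hB : m'.choose ℓ' ≤ (m'+1).choose ℓ' := Nat.choose_le_choose ℓ' (by omega)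
  have hC : m'.choose (ℓ'+1) ≤ (m'+1).choose (ℓ'+1) := Nat.choose_le_choose (ℓ'+1) (by omega)
  have hE : 1 ≤ (m'+1).choose (ℓ'+1) := Nat.choose_pos (by omega)
  have hD : m'.choose (ℓ'+1) ≠ 0 ∨ m'.choose ℓ' = 1 := by
    rcases Nat.lt_or_ge m' (ℓ'+1) with h | h
    · right
      have hme : m' = ℓ' := by omega
      rw [hme, Nat.choose_self]
    · exact Or.inl (Nat.choose_pos h).ne'
  set i := min (n - max (m'.choose (ℓ'+1)) 1) ((m'+1).choose ℓ') with hidef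
  have hi1 : 1 ≤ i := by omega
  have hi2 : i ≤ n - 1 := by omega
  have hIa : m'.choose ℓ' ≤ i := by omega
  have hIb : i ≤ (m'+1).choose ℓ' := by omega
  have hIc : m'.choose (ℓ'+1) ≤ n - i := by omega
  have hId : n - i ≤ (m'+1).choose (ℓ'+1) := by omega
  refine ⟨i, hi1, hi2, ?_⟩
  rw [show ℓ' + 1 - 1 = ℓ' by omega]
  rw [lsmF_decomp i n ℓ' (by omega) hℓ']
  rw [lsmF_big n (ℓ'+1) (n + 1) (by omega) (by omega)]
  refine (Finset.sum_congr rfl fun k _ => ?_).symm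
  have hpas : (ℓ' + 1 + k).choose (ℓ'+1) = (ℓ' + k).choose ℓ' + (ℓ' + k).choose (ℓ'+1) := by
    rw [show ℓ' + 1 + k = (ℓ' + k) + 1 by omega]
    exact Nat.choose_succ_succ (ℓ' + k) ℓ'
  rcases Nat.lt_or_ge (ℓ' + k) (m' + 1) with hk | hk
  · -- ℓ' + k ≤ m'
    have c1 : (ℓ' + k).choose ℓ' ≤ m'.choose ℓ' := Nat.choose_le_choose ℓ' (by omega)
    have c2 : (ℓ' + k).choose (ℓ'+1) ≤ m'.choose (ℓ'+1) := Nat.choose_le_choose (ℓ'+1) (by omega)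
    omega
  · -- ℓ' + k ≥ m' + 1
    have c1 : (m'+1).choose ℓ' ≤ (ℓ' + k).choose ℓ' := Nat.choose_le_choose ℓ' (by omega)
    have c2 : (m'+1).choose (ℓ'+1) ≤ (ℓ' + k).choose (ℓ'+1) := Nat.choose_le_choose (ℓ'+1) (by omega)
    omega

private lemma exists_valid (n ℓ : ℕ) (hn : 1 ≤ n) (hℓ : 1 ≤ ℓ) :
    ∃ m, m.choose ℓ ≤ n ∧ n ≤ (m + 1).choose ℓ := by
  have key : ∀ T : ℕ, n ≤ T.choose ℓ → ∃ m, m.choose ℓ ≤ n ∧ n ≤ (m + 1).choose ℓ := by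
    intro T
    induction T with
    | zero =>
        intro h
        have : Nat.choose 0 ℓ = 0 := Nat.choose_eq_zero_of_lt (by omega)
        omega
    | succ T ih =>
        intro h
        rcases le_or_gt (T.choose ℓ) n with h' | h'
        · exact ⟨T, h', h⟩
        · exact ih (by omega)
  refine key (ℓ + n) ?_
  have := choose_ge ℓ n hℓ
  omega

/-- Closed form for the optimal read cost `τ(n,ℓ)` of the horizontal-tiering
scheme: if `C(m,ℓ) ≤ n ≤ C(m+1,ℓ)` then
`τ(n,ℓ) = [ℓ·C(m,ℓ+1) + (m-ℓ+1)·(n - C(m,ℓ))]·r`. -/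
theorem tau_closed_form (r : ℝ) (hr : 0 < r) (τ : ℕ → ℕ → ℝ)
    (hbase1 : ∀ ℓ, 1 ≤ ℓ → τ 1 ℓ = 0)
    (hbase2 : ∀ n, 1 < n → τ n 1 = (Nat.choose n 2 : ℝ) * r)
    (hrec : ∀ n ℓ, 1 < n → 1 < ℓ →
      τ n ℓ = sInf {x : ℝ | ∃ i : ℕ, 1 ≤ i ∧ i ≤ n - 1 ∧
        x = τ i (ℓ - 1) + ((n - i : ℕ) : ℝ) * r + τ (n - i) ℓ}) :
    ∀ n ℓ m : ℕ, 1 ≤ n → 1 ≤ ℓ →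
      Nat.choose m ℓ ≤ n → n ≤ Nat.choose (m + 1) ℓ →
      τ n ℓ = ((ℓ * Nat.choose m (ℓ + 1) + (m + 1 - ℓ) * (n - Nat.choose m ℓ) : ℕ) : ℝ) * r := by
  have key : ∀ n : ℕ, 1 ≤ n → ∀ ℓ : ℕ, 1 ≤ ℓ → τ n ℓ = (lsmF n ℓ : ℝ) * r := by
    intro n
    induction n using Nat.strong_induction_on with
    | _ n IH =>
      intro hn ℓ hℓ
      rcases eq_or_lt_of_le hn with h1 | h1
      · rw [← h1, hbase1 ℓ hℓ, lsmF_one]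
        simp
      · rcases eq_or_lt_of_le hℓ with h2 | h2
        · -- ℓ = 1
          rw [← h2, hbase2 n h1]
          have hval : lsmF n 1 = n.choose 2 := by
            have he := lsmF_eq n 1 (n - 1) (by omega) le_rfl
              (by rw [Nat.choose_one_right]; omega)
              (by rw [show n - 1 + 1 = n by omega, Nat.choose_one_right])
            rw [Nat.choose_one_right, show n - (n-1) = 1 by omega,
              show (1:ℕ)+1 = 2 by norm_num] at he
            have hp := Nat.choose_succ_succ (n-1) 1
            simp only [Nat.succ_eq_add_one, Nat.choose_one_right,
              show (1:ℕ)+1 = 2 by norm_num, show n - 1 + 1 = n by omega] at hp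
            omega
          rw [hval]
        · -- main case : 2 ≤ n, 2 ≤ ℓ
          obtain ⟨m, hv1, hv2⟩ := exists_valid n ℓ (by omega) hℓ
          obtain ⟨i₀, hi1, hi2, hsum⟩ := lsmF_split n ℓ m (by omega) (by omega) hv1 hv2
          have elem : ∀ i : ℕ, 1 ≤ i → i ≤ n - 1 →
              τ i (ℓ - 1) + ((n - i : ℕ) : ℝ) * r + τ (n - i) ℓ
                = ((lsmF i (ℓ - 1) + (n - i) + lsmF (n - i) ℓ : ℕ) : ℝ) * r := by
            intro i hia hib
            rw [IH i (by omega) hia (ℓ - 1) (by omega),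
              IH (n - i) (by omega) (by omega) ℓ hℓ]
            push_cast
            ring
          have lb : ∀ x ∈ {x : ℝ | ∃ i : ℕ, 1 ≤ i ∧ i ≤ n - 1 ∧
              x = τ i (ℓ - 1) + ((n - i : ℕ) : ℝ) * r + τ (n - i) ℓ},
              (lsmF n ℓ : ℝ) * r ≤ x := by
            rintro x ⟨i, hia, hib, rfl⟩
            rw [elem i hia hib]
            have hle := lsmF_le n ℓ i (by omega) (by omega)
            have hle' : (lsmF n ℓ : ℝ) ≤ ((lsmF i (ℓ - 1) + (n - i) + lsmF (n - i) ℓ : ℕ) : ℝ) := by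
              exact_mod_cast hle
            exact mul_le_mul_of_nonneg_right hle' hr.le
          have mem : (lsmF n ℓ : ℝ) * r ∈ {x : ℝ | ∃ i : ℕ, 1 ≤ i ∧ i ≤ n - 1 ∧
              x = τ i (ℓ - 1) + ((n - i : ℕ) : ℝ) * r + τ (n - i) ℓ} := by
            refine ⟨i₀, hi1, hi2, ?_⟩
            rw [elem i₀ hi1 hi2, hsum]
          rw [hrec n ℓ h1 h2]
          exact le_antisymm (csInf_le ⟨_, lb⟩ mem) (le_csInf ⟨_, mem⟩ lb)
  intro n ℓ m hn hℓ hm1 hm2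
  rw [key n hn ℓ hℓ, lsmF_eq n ℓ m hn hℓ hm1 hm2]
end

section
/- Fix a real number α with 0 ≤ α < 1 and a positive integer k. For a positive integer δ, define the benefit B(δ) = α + δ·(1-α) + δ·(1-α)·(k-1) + ∑_{i=1}^{δ}[α + i·(1-α)] and the cost C(δ) = ∑_{i=1}^{δ}[α + (δ+k-i+1)·(1-α)] + ∑_{i=1}^{δ} i·(1-α). Then B(δ) - C(δ) = α - (δ·(δ+1)/2)·(1-α). Consequently, B(δ) ≥ C(δ) if and only if α/(1-α) ≥ δ·(δ+1)/2. -/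
lemma gauss_icc (δ : ℕ) : ∑ i ∈ Finset.Icc 1 δ, (i : ℝ) = (δ : ℝ) * ((δ : ℝ) + 1) / 2 := by
  induction δ with
  | zero => simp
  | succ n ih =>
      rw [Finset.sum_Icc_succ_top (by omega : 1 ≤ n + 1), ih]
      push_cast; ring

/-- Benefit/cost analysis for raising the compaction-trigger threshold under a
skewed workload: `B(δ) - C(δ) = α - (δ(δ+1)/2)·(1-α)`, hence `B(δ) ≥ C(δ)`
iff `α/(1-α) ≥ δ(δ+1)/2`. -/
theorem skew_threshold_benefit (α : ℝ) (hα0 : 0 ≤ α) (hα1 : α < 1)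
    (k δ : ℕ) (hk : 1 ≤ k) (hδ : 1 ≤ δ) :
    let B : ℝ := α + (δ : ℝ) * (1 - α) + (δ : ℝ) * (1 - α) * ((k : ℝ) - 1)
      + ∑ i ∈ Finset.Icc 1 δ, (α + (i : ℝ) * (1 - α))
    let C : ℝ := (∑ i ∈ Finset.Icc 1 δ, (α + ((δ : ℝ) + (k : ℝ) - (i : ℝ) + 1) * (1 - α)))
      + ∑ i ∈ Finset.Icc 1 δ, (i : ℝ) * (1 - α)
    B - C = α - ((δ : ℝ) * ((δ : ℝ) + 1) / 2) * (1 - α) ∧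
      (B ≥ C ↔ α / (1 - α) ≥ (δ : ℝ) * ((δ : ℝ) + 1) / 2) := by
  intro B C
  have hcard : (Finset.Icc 1 δ).card = δ := by rw [Nat.card_Icc]; omega
  have h1 : ∑ i ∈ Finset.Icc 1 δ, (α + (i : ℝ) * (1 - α))
      = (δ : ℝ) * α + ((δ : ℝ) * ((δ : ℝ) + 1) / 2) * (1 - α) := by
    rw [Finset.sum_add_distrib, Finset.sum_const, hcard, ← Finset.sum_mul, gauss_icc]
    simp [nsmul_eq_mul]
  have h2 : ∑ i ∈ Finset.Icc 1 δ, (α + ((δ : ℝ) + (k : ℝ) - (i : ℝ) + 1) * (1 - α))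
      = (δ : ℝ) * α + ((δ : ℝ) * ((δ : ℝ) + (k : ℝ) + 1) - (δ : ℝ) * ((δ : ℝ) + 1) / 2) * (1 - α) := by
    have : ∀ i ∈ Finset.Icc 1 δ, (α + ((δ : ℝ) + (k : ℝ) - (i : ℝ) + 1) * (1 - α))
        = (α + ((δ : ℝ) + (k : ℝ) + 1) * (1 - α)) - (i : ℝ) * (1 - α) := by
      intro i _; ring
    rw [Finset.sum_congr rfl this, Finset.sum_sub_distrib, Finset.sum_const, hcard,
      ← Finset.sum_mul, gauss_icc]
    simp [nsmul_eq_mul]; ring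
  have h3 : ∑ i ∈ Finset.Icc 1 δ, (i : ℝ) * (1 - α)
      = ((δ : ℝ) * ((δ : ℝ) + 1) / 2) * (1 - α) := by
    rw [← Finset.sum_mul, gauss_icc]
  have hdiff : B - C = α - ((δ : ℝ) * ((δ : ℝ) + 1) / 2) * (1 - α) := by
    show _ = _
    simp only [B, C, h1, h2, h3]; ring
  refine ⟨hdiff, ?_⟩
  have h1α : (0 : ℝ) < 1 - α := by linarith
  rw [ge_iff_le, ge_iff_le, le_div_iff₀ h1α, ← sub_nonneg, hdiff]
  constructor <;> intro h <;> nlinarith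
end

section
/- In any compaction sequence minimizing total read cost for the tiered LSM-tree problem ψ(n,ℓ) (n buffer flushes, ℓ levels, merge cost model where a compaction (I, l₁, l₂) merges all runs of levels l₁..l₂-1 into level l₂, and each lookup pays one I/O per existing run), every compaction may be assumed to start from Level 1: replacing any compaction (I, l₁, l₂) with l₁ > 1 by (I, 1, l₂) never increases the total read cost. -/
/-- State of the LSM-tree: number of runs currently present at each level. -/
def flushRun (s : ℕ → ℕ) : ℕ → ℕ :=
  fun j => if j = 1 then s 1 + 1 else s j

/-- Applying a compaction `(l₁, l₂)`: all runs in levels `l₁,…,l₂-1` are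
merged into a single new run at level `l₂`. -/
def applyCompaction (s : ℕ → ℕ) (c : ℕ × ℕ) : ℕ → ℕ :=
  fun j => if c.1 ≤ j ∧ j < c.2 then 0 else if j = c.2 then s c.2 + 1 else s j

/-- `lsmState sched t` is the per-level run count after the `t`-th buffer
flush and the compactions scheduled (in order) at time `t`; the schedule
`sched` gives, for each flush time, the list of compactions `(l₁, l₂)`
performed right after that flush. -/
def lsmState (sched : ℕ → List (ℕ × ℕ)) : ℕ → (ℕ → ℕ)
  | 0 => fun _ => 0
  | t + 1 => (sched (t + 1)).foldl applyCompaction (flushRun (lsmState sched t))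

/-- Total read cost over `n` flushes with `r` lookups between consecutive
flushes, each lookup costing one I/O per run present in levels `1..ℓ`. -/
noncomputable def readCost (sched : ℕ → List (ℕ × ℕ)) (ℓ n : ℕ) (r : ℝ) : ℝ :=
  ∑ t ∈ Finset.Icc 1 n, r * ((∑ j ∈ Finset.Icc 1 ℓ, lsmState sched t j : ℕ) : ℝ)

lemma applyCompaction_mono {s s' : ℕ → ℕ} (h : ∀ j, s j ≤ s' j) (c : ℕ × ℕ) :
    ∀ j, applyCompaction s c j ≤ applyCompaction s' c j := by
  intro j
  unfold applyCompaction
  split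
  · exact le_refl 0
  · split
    · exact Nat.succ_le_succ (h _)
    · exact h j

lemma foldl_mono {s s' : ℕ → ℕ} (h : ∀ j, s j ≤ s' j) (L : List (ℕ × ℕ)) :
    ∀ j, L.foldl applyCompaction s j ≤ L.foldl applyCompaction s' j := by
  induction L generalizing s s' with
  | nil => exact h
  | cons c L ih => exact ih (applyCompaction_mono h c)

lemma key_step {s s' : ℕ → ℕ} (h : ∀ j, s j ≤ s' j) {l₁ l₂ : ℕ} (hl₁ : 1 ≤ l₁) (hl₁₂ : l₁ < l₂) :
    ∀ j, applyCompaction s (1, l₂) j ≤ applyCompaction s' (l₁, l₂) j := by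
  intro j
  unfold applyCompaction
  simp only
  by_cases h1 : l₁ ≤ j ∧ j < l₂
  · simp [h1, h1.2.le.trans (le_refl _), show 1 ≤ j ∧ j < l₂ from ⟨le_trans hl₁ h1.1, h1.2⟩]
  · by_cases h2 : 1 ≤ j ∧ j < l₂
    · simp [h1, h2]
    · simp only [h1, h2, if_false]
      split
      · exact Nat.succ_le_succ (h _)
      · exact h j

lemma state_mono (t₀ l₁ l₂ : ℕ) (hl₁ : 1 ≤ l₁) (hl₁₂ : l₁ < l₂)
    (sched sched' : ℕ → List (ℕ × ℕ)) (L₁ L₂ : List (ℕ × ℕ))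
    (hs : sched t₀ = L₁ ++ (l₁, l₂) :: L₂)
    (hs' : sched' t₀ = L₁ ++ (1, l₂) :: L₂)
    (hother : ∀ t, t ≠ t₀ → sched' t = sched t) :
    ∀ t j, lsmState sched' t j ≤ lsmState sched t j := by
  intro t
  induction t with
  | zero => intro j; exact le_refl _
  | succ t ih =>
    have hflush : ∀ j, flushRun (lsmState sched' t) j ≤ flushRun (lsmState sched t) j := by
      intro j; unfold flushRun; split
      · exact Nat.succ_le_succ (ih _)
      · exact ih j
    by_cases ht : t + 1 = t₀
    · intro j
      show (sched' (t+1)).foldl applyCompaction _ j ≤ (sched (t+1)).foldl applyCompaction _ j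
      rw [ht, hs, hs', List.foldl_append, List.foldl_append, List.foldl_cons, List.foldl_cons]
      exact foldl_mono (key_step (foldl_mono hflush L₁) hl₁ hl₁₂) L₂ j
    · intro j
      show (sched' (t+1)).foldl applyCompaction _ j ≤ (sched (t+1)).foldl applyCompaction _ j
      rw [hother _ ht]
      exact foldl_mono hflush _ j

/-- Replacing a compaction `(l₁, l₂)` with `l₁ > 1` by the compaction
`(1, l₂)` starting from Level 1 (leaving everything else in the schedule
unchanged) never increases the total read cost. -/
theorem start_from_level_one (ℓ n t₀ l₁ l₂ : ℕ) (r : ℝ) (hr : 0 ≤ r)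
    (hl₁ : 1 < l₁) (hl₁₂ : l₁ < l₂) (hl₂ : l₂ ≤ ℓ)
    (sched sched' : ℕ → List (ℕ × ℕ)) (L₁ L₂ : List (ℕ × ℕ))
    (hs : sched t₀ = L₁ ++ (l₁, l₂) :: L₂)
    (hs' : sched' t₀ = L₁ ++ (1, l₂) :: L₂)
    (hother : ∀ t, t ≠ t₀ → sched' t = sched t) :
    readCost sched' ℓ n r ≤ readCost sched ℓ n r := by
  have hmono := state_mono t₀ l₁ l₂ hl₁.le hl₁₂ sched sched' L₁ L₂ hs hs' hother
  unfold readCost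
  apply Finset.sum_le_sum
  intro t _
  apply mul_le_mul_of_nonneg_left _ hr
  exact_mod_cast Finset.sum_le_sum fun j _ => hmono t j
end
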